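/- arXiv:1307.8162 — 3 statements merged into one kernel-verified Lean document; each statement's English description precedes it below -/
import Mathlib

section
/- Let K be a field, E the exterior algebra on basis x_1,...,x_n,y_1,...,y_n, and f = ∑_{i=1}^n x_i∧y_i. If e is a homogeneous element of E of degree d < n satisfying e∧f = 0, then when e is written in the standard monomial basis, the coefficient of every monomial of the form x_{i_1}∧...∧x_{i_d} (i.e., every monomial involving only x-variables) is zero. -/
open ExteriorAlgebra

/-- The basis vector `x_i` in the exterior algebra on `x_1,…,x_n,y_1,…,y_n`. -/
noncomputable def xv (K : Type) [Field K] (n : ℕ) (i : Fin n) :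
    ExteriorAlgebra K (Fin (n + n) → K) :=
  ι K (Pi.single (Fin.castAdd n i) 1)

/-- The basis vector `y_i` in the exterior algebra on `x_1,…,x_n,y_1,…,y_n`. -/
noncomputable def yv (K : Type) [Field K] (n : ℕ) (i : Fin n) :
    ExteriorAlgebra K (Fin (n + n) → K) :=
  ι K (Pi.single (Fin.natAdd n i) 1)

/-- The quadric `f = ∑ x_i ∧ y_i`. -/
noncomputable def ff (K : Type) [Field K] (n : ℕ) :
    ExteriorAlgebra K (Fin (n + n) → K) :=
  ∑ i : Fin n, xv K n i * yv K n i

/-- The standard wedge monomial indexed by a finite set of basis indices,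
multiplied in increasing order. -/
noncomputable def wedgeMonomial (K : Type) [Field K] (n : ℕ)
    (s : Finset (Fin (n + n))) : ExteriorAlgebra K (Fin (n + n) → K) :=
  ((s.sort (· ≤ ·)).map (fun i => ι K (Pi.single i (1 : K)))).prod

/-
The coefficient of a wedge monomial `m_T` can be read off by contracting successively with the
dual basis vectors indexed by `T`: this sends `m_T` to `1` and kills every monomial that misses a
variable of `T`. Let `s` consist of `x`-variables only, with `|s| = d < n`; then some `x_j` is not
in `s`, and neither is `y_j`. In `e ∧ f = ∑ c_{s'} m_{s'} ∧ x_i ∧ y_i` the only term containing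
every variable of `s ∪ {x_j, y_j}` is `(s', i) = (s, j)`, since `y_j` is the only `y`-variable
there. Reading off the coefficient of `m_s ∧ x_j ∧ y_j` therefore gives `c_s = 0`.
-/

section Contraction

variable (R : Type*) {σ : Type*} [CommRing R]

local notation "Λ" => ExteriorAlgebra R (σ → R)

noncomputable def coordContract (t : σ) : Λ →ₗ[R] Λ :=
  CliffordAlgebra.contractLeft (LinearMap.proj t)

noncomputable def iterContract : List σ → Λ →ₗ[R] Λ
  | [] => LinearMap.id
  | t :: T => (iterContract T).comp (coordContract R t)

variable {R}

-- Contractions anticommute, so a factor `coordContract t` anywhere in `T` may be applied first.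
theorem iterContract_eq_zero {t : σ} {T : List σ} (ht : t ∈ T) {x : Λ}
    (hx : coordContract R t x = 0) : iterContract R T x = 0 := by
  induction T generalizing x with
  | nil => simp at ht
  | cons a T ih =>
    simp only [iterContract, LinearMap.comp_apply]
    rcases List.mem_cons.1 ht with rfl | ht
    · rw [hx, map_zero]
    · refine ih ht ?_
      simp only [coordContract] at hx ⊢
      rw [CliffordAlgebra.contractLeft_comm, hx, map_zero, neg_zero]

variable (R) [DecidableEq σ]

noncomputable def wedgeProd (L : List σ) : Λ :=
  (L.map fun i => ι R (Pi.single i (1 : R))).prod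

variable {R}

theorem wedgeProd_cons (k : σ) (L : List σ) :
    wedgeProd R (k :: L) = ι R (Pi.single k 1) * wedgeProd R L := by
  simp [wedgeProd]

theorem wedgeProd_append (L L' : List σ) :
    wedgeProd R (L ++ L') = wedgeProd R L * wedgeProd R L' := by
  simp [wedgeProd]

theorem coordContract_ι_single_mul (t k : σ) (x : Λ) :
    coordContract R t (ι R (Pi.single k 1) * x) =
      (if t = k then (1 : R) else 0) • x - ι R (Pi.single k 1) * coordContract R t x := by
  simpa [coordContract, Pi.single_apply] using
    CliffordAlgebra.contractLeft_ι_mul (Q := 0) (d := LinearMap.proj t) (Pi.single k (1 : R)) x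

theorem coordContract_wedgeProd_of_notMem {t : σ} {L : List σ} (h : t ∉ L) :
    coordContract R t (wedgeProd R L) = 0 := by
  induction L with
  | nil => exact CliffordAlgebra.contractLeft_one _ _
  | cons k L ih =>
    rw [List.mem_cons, not_or] at h
    rw [wedgeProd_cons, coordContract_ι_single_mul, ih h.2, if_neg h.1, zero_smul, mul_zero,
      sub_zero]

theorem coordContract_wedgeProd_cons_self {t : σ} {L : List σ} (h : t ∉ L) :
    coordContract R t (wedgeProd R (t :: L)) = wedgeProd R L := by
  rw [wedgeProd_cons, coordContract_ι_single_mul, coordContract_wedgeProd_of_notMem h, if_pos rfl,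
    one_smul, mul_zero, sub_zero]

theorem iterContract_wedgeProd_self {L : List σ} (h : L.Nodup) :
    iterContract R L (wedgeProd R L) = 1 := by
  induction L with
  | nil => simp [iterContract, wedgeProd]
  | cons t L ih =>
    rw [List.nodup_cons] at h
    simp only [iterContract, LinearMap.comp_apply]
    rw [coordContract_wedgeProd_cons_self h.1, ih h.2]

theorem iterContract_wedgeProd_of_notMem {t : σ} {T L : List σ} (htT : t ∈ T) (htL : t ∉ L) :
    iterContract R T (wedgeProd R L) = 0 :=
  iterContract_eq_zero htT (coordContract_wedgeProd_of_notMem htL)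

end Contraction

theorem Fin.castAdd_ne_natAdd {n : ℕ} (i j : Fin n) : Fin.castAdd n i ≠ Fin.natAdd n j :=
  Fin.ne_of_val_ne (by rw [Fin.val_castAdd, Fin.val_natAdd]; omega)

section Quadric

variable {n : ℕ}

theorem natAdd_notMem_of_forall_lt {s : Finset (Fin (n + n))} (hs : ∀ t ∈ s, (t : ℕ) < n)
    (k : Fin n) : Fin.natAdd n k ∉ s := fun hk => by
  have := hs _ hk
  rw [Fin.val_natAdd] at this
  omega

theorem exists_castAdd_notMem {s : Finset (Fin (n + n))} (hs : s.card < n) :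
    ∃ j : Fin n, Fin.castAdd n j ∉ s := by
  obtain ⟨_, hm, hnot⟩ := Finset.exists_mem_notMem_of_card_lt_card
    (s := s) (t := Finset.univ.map (Fin.castAddEmb n)) (by simpa using hs)
  obtain ⟨j, -, rfl⟩ := Finset.mem_map.1 hm
  exact ⟨j, hnot⟩

theorem eq_of_insert_insert_subset {s s' : Finset (Fin (n + n))} {i j : Fin n}
    (hs : ∀ t ∈ s, (t : ℕ) < n) (hj : Fin.castAdd n j ∉ s) (hcard : s'.card ≤ s.card)
    (h : insert (Fin.castAdd n j) (insert (Fin.natAdd n j) s) ⊆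
      insert (Fin.castAdd n i) (insert (Fin.natAdd n i) s')) :
    s' = s ∧ i = j := by
  have hy := natAdd_notMem_of_forall_lt hs
  have hA : (insert (Fin.castAdd n j) (insert (Fin.natAdd n j) s)).card = s.card + 2 := by
    rw [Finset.card_insert_of_notMem, Finset.card_insert_of_notMem (hy j)]
    simp only [Finset.mem_insert, not_or]
    exact ⟨Fin.castAdd_ne_natAdd j j, hj⟩
  have hB : (insert (Fin.castAdd n i) (insert (Fin.natAdd n i) s')).card ≤ s.card + 2 :=
    calc _ ≤ (insert (Fin.natAdd n i) s').card + 1 := Finset.card_insert_le _ _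
      _ ≤ s'.card + 2 := by grind [Finset.card_insert_le]
      _ ≤ s.card + 2 := by omega
  have hAB := Finset.eq_of_subset_of_card_le h (by omega)
  -- `y_i` must occur in `s ∪ {x_j, y_j}`, whose only `y`-variable is `y_j`.
  have hij : i = j := by
    have hyi : Fin.natAdd n i ∈ insert (Fin.castAdd n j) (insert (Fin.natAdd n j) s) := by
      rw [hAB]
      exact Finset.mem_insert_of_mem (Finset.mem_insert_self _ _)
    simp only [Finset.mem_insert] at hyi
    rcases hyi with hyi | hyi | hyi
    exacts [absurd hyi.symm (Fin.castAdd_ne_natAdd j i), (Fin.natAdd_inj n).1 hyi,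
      absurd hyi (hy i)]
  subst hij
  refine ⟨(Finset.eq_of_subset_of_card_le (fun t ht => ?_) hcard).symm, rfl⟩
  have ht' := h (Finset.mem_insert_of_mem (Finset.mem_insert_of_mem ht))
  simp only [Finset.mem_insert] at ht'
  rcases ht' with rfl | rfl | ht'
  exacts [absurd ht hj, absurd ht (hy i), ht']

def pairIndices (s : Finset (Fin (n + n))) (i : Fin n) : List (Fin (n + n)) :=
  s.sort (· ≤ ·) ++ [Fin.castAdd n i, Fin.natAdd n i]

theorem mem_pairIndices {s : Finset (Fin (n + n))} {i : Fin n} {t : Fin (n + n)} :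
    t ∈ pairIndices s i ↔ t ∈ insert (Fin.castAdd n i) (insert (Fin.natAdd n i) s) := by
  simp only [pairIndices, List.mem_append, Finset.mem_sort, List.mem_cons, List.not_mem_nil,
    Finset.mem_insert, or_false]
  tauto

theorem nodup_pairIndices {s : Finset (Fin (n + n))} {j : Fin n} (hx : Fin.castAdd n j ∉ s)
    (hy : Fin.natAdd n j ∉ s) : (pairIndices s j).Nodup := by
  simp only [pairIndices, List.nodup_append, Finset.sort_nodup, List.nodup_cons, List.mem_cons,
    List.not_mem_nil, List.nodup_nil, Finset.mem_sort]
  refine ⟨trivial, ⟨by simpa using Fin.castAdd_ne_natAdd j j, by simp, trivial⟩, ?_⟩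
  rintro a ha b (rfl | rfl | hb) rfl
  exacts [hx ha, hy ha, hb.elim]

theorem sum_smul_wedgeMonomial_mul_ff (K : Type) [Field K] (d : ℕ) (c : Finset (Fin (n + n)) → K) :
    (∑ s ∈ Finset.univ.powersetCard d, c s • wedgeMonomial K n s) * ff K n =
      ∑ s ∈ Finset.univ.powersetCard d, ∑ i : Fin n, c s • wedgeProd K (pairIndices s i) := by
  rw [ff, Finset.sum_mul]
  refine Finset.sum_congr rfl fun s _ => ?_
  rw [smul_mul_assoc, Finset.mul_sum, Finset.smul_sum]
  refine Finset.sum_congr rfl fun i _ => ?_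
  simp [pairIndices, wedgeProd, wedgeMonomial, xv, yv]

theorem iterContract_pairIndices (K : Type) [Field K] {s s' : Finset (Fin (n + n))} {i j : Fin n}
    (hs : ∀ t ∈ s, (t : ℕ) < n) (hj : Fin.castAdd n j ∉ s) (hcard : s'.card ≤ s.card) :
    iterContract K (pairIndices s j) (wedgeProd K (pairIndices s' i)) =
      if s' = s ∧ i = j then 1 else 0 := by
  split_ifs with hsi
  · obtain ⟨rfl, rfl⟩ := hsi
    exact iterContract_wedgeProd_self (nodup_pairIndices hj (natAdd_notMem_of_forall_lt hs _))
  obtain ⟨t, htj, hti⟩ : ∃ t ∈ pairIndices s j, t ∉ pairIndices s' i := by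
    by_contra! hsub
    exact hsi (eq_of_insert_insert_subset hs hj hcard fun t ht =>
      mem_pairIndices.1 (hsub t (mem_pairIndices.2 ht)))
  exact iterContract_wedgeProd_of_notMem htj hti

end Quadric

/-- If a homogeneous element `e` of degree `d < n`, written in the standard
monomial basis with coefficients `c`, satisfies `e ∧ f = 0`, then the
coefficient of every monomial involving only `x`-variables is zero. -/
theorem stmt2 (K : Type) [Field K] (n d : ℕ) (hd : d < n)
    (c : Finset (Fin (n + n)) → K)
    (e : ExteriorAlgebra K (Fin (n + n) → K))
    (he : e = ∑ s ∈ Finset.univ.powersetCard d, c s • wedgeMonomial K n s)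
    (hef : e * ff K n = 0) :
    ∀ s : Finset (Fin (n + n)), s.card = d → (∀ i ∈ s, (i : ℕ) < n) →
      c s = 0 := by
  intro s hcard hs
  obtain ⟨j, hj⟩ := exists_castAdd_notMem (hcard ▸ hd)
  have h : c s • (1 : ExteriorAlgebra K (Fin (n + n) → K)) = 0 :=
    calc c s • 1
        = ∑ s' ∈ Finset.univ.powersetCard d, ∑ i : Fin n,
            c s' • (if s' = s ∧ i = j then 1 else 0) := by
          simp [ite_and, Finset.sum_ite_eq', hcard]
      _ = iterContract K (pairIndices s j) (e * ff K n) := by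
          rw [he, sum_smul_wedgeMonomial_mul_ff, map_sum]
          refine Finset.sum_congr rfl fun s' hs' => ?_
          rw [map_sum]
          refine Finset.sum_congr rfl fun i _ => ?_
          rw [map_smul, iterContract_pairIndices K hs hj
            ((Finset.mem_powersetCard_univ.1 hs').trans hcard.symm).le]
      _ = 0 := by rw [hef, map_zero]
  exact (smul_eq_zero.1 h).resolve_right one_ne_zero
end

section
/- Let K be a field, E the exterior algebra on basis x_1,...,x_n,y_1,...,y_n, and f = ∑_{i=1}^n x_i∧y_i. Then the element s = x_1∧...∧x_n is not expressible as g∧f + h where g ∈ E and h is a sum of homogeneous elements of the annihilator of f of degree strictly less than n; in particular s is a minimal generator of degree n of the annihilator ideal 0:(f). -/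
open ExteriorAlgebra

/-- The family of alternating maps which is the determinant in degree `2n` and `0` else. -/
noncomputable def detF (K : Type) [Field K] (n : ℕ) :
    ∀ i : ℕ, (Fin (n + n) → K) [⋀^Fin i]→ₗ[K] K := fun i =>
  dite (i = n + n) (fun h => by subst h; exact Matrix.detRowAlternating) (fun _ => 0)

lemma detF_self (K : Type) [Field K] (n : ℕ) :
    detF K n (n + n) = Matrix.detRowAlternating := by simp [detF]

lemma detF_ne (K : Type) [Field K] (n : ℕ) {i : ℕ} (h : i ≠ n + n) :
    detF K n i = 0 := dif_neg h

/-- The functional `liftAlternating (detF K n)` vanishes on exterior powers of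
degree different from `2n`. -/
lemma lift_zero_on (K : Type) [Field K] (n m : ℕ) (hm : m ≠ n + n)
    (e : ExteriorAlgebra K (Fin (n + n) → K)) (he : e ∈ ⋀[K]^m (Fin (n + n) → K)) :
    liftAlternating (detF K n) e = 0 := by
  rw [← ιMulti_span_fixedDegree] at he
  induction he using Submodule.span_induction with
  | mem x hx =>
    obtain ⟨v, rfl⟩ := hx
    rw [liftAlternating_apply_ιMulti, detF_ne K n hm]
    rfl
  | zero => simp
  | add x y _ _ hx hy => simp [hx, hy]
  | smul a x _ hx => simp [hx]

lemma Y_mem (K : Type) [Field K] (n : ℕ) :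
    (List.ofFn (yv K n)).prod ∈ ⋀[K]^n (Fin (n + n) → K) := by
  have : (List.ofFn (yv K n)).prod
      = ιMulti K n (fun i => Pi.single (Fin.natAdd n i) (1:K)) := by
    rw [ιMulti_apply]; rfl
  rw [this]
  exact ιMulti_range K n (Set.mem_range_self _)

lemma yY_zero (K : Type) [Field K] (n : ℕ) (i : Fin n) :
    yv K n i * (List.ofFn (yv K n)).prod = 0 := by
  set w : Fin (n + 1) → (Fin (n + n) → K) :=
    Fin.cons (Pi.single (Fin.natAdd n i) 1) (fun j => Pi.single (Fin.natAdd n j) (1:K)) with hw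
  have h1 : ιMulti K (n + 1) w = yv K n i * (List.ofFn (yv K n)).prod := by
    rw [ιMulti_apply, List.ofFn_succ, List.prod_cons]
    simp only [hw, Fin.cons_zero, Fin.cons_succ]
    rfl
  have h2 : ιMulti K (n + 1) w = 0 :=
    (ιMulti K (n + 1)).map_eq_zero_of_eq w (by simp [hw]) (Fin.succ_ne_zero i).symm
      (i := (0 : Fin (n+1))) (j := i.succ)
  rw [← h1, h2]

lemma ffY_zero (K : Type) [Field K] (n : ℕ) :
    ff K n * (List.ofFn (yv K n)).prod = 0 := by
  rw [ff, Finset.sum_mul]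
  refine Finset.sum_eq_zero fun i _ => ?_
  rw [mul_assoc, yY_zero, mul_zero]

lemma sY_eq (K : Type) [Field K] (n : ℕ) :
    (List.ofFn (xv K n)).prod * (List.ofFn (yv K n)).prod
      = ιMulti K (n + n) (fun j => Pi.single j (1:K)) := by
  rw [ιMulti_apply, List.ofFn_add (f := fun j : Fin (n+n) => ι K (Pi.single j (1:K))),
    List.prod_append]
  rfl

lemma det_single (K : Type) [Field K] (n : ℕ) :
    Matrix.detRowAlternating (fun j : Fin (n+n) => Pi.single j (1:K)) = 1 := by
  have : (Matrix.of fun j : Fin (n+n) => Pi.single j (1:K)) = 1 := by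
    ext j k
    simp [Matrix.one_apply, Pi.single_apply, eq_comm]
  show Matrix.det (Matrix.of fun j : Fin (n+n) => Pi.single j (1:K)) = 1
  rw [this, Matrix.det_one]

/-- `s = x_1 ∧ ⋯ ∧ x_n` is not expressible as `g ∧ f + h` with `h` a sum of
homogeneous elements of degree `< n` annihilating `f`; i.e. `s` is a minimal
degree-`n` generator of the annihilator of `f`. -/
theorem stmt3 (K : Type) [Field K] (n : ℕ) (hn : 0 < n) :
    ¬ ∃ (g h : ExteriorAlgebra K (Fin (n + n) → K)),
      h ∈ Submodule.span K {e : ExteriorAlgebra K (Fin (n + n) → K) |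
          ∃ d : ℕ, d < n ∧ e ∈ ⋀[K]^d (Fin (n + n) → K) ∧ e * ff K n = 0} ∧
      (List.ofFn (xv K n)).prod = g * ff K n + h := by
  rintro ⟨g, h, hh, heq⟩
  set Y := (List.ofFn (yv K n)).prod with hY
  set L : ExteriorAlgebra K (Fin (n + n) → K) →ₗ[K] K :=
    (liftAlternating (detF K n)).comp (LinearMap.mulRight K Y) with hL
  have hLs : L ((List.ofFn (xv K n)).prod) = 1 := by
    simp only [hL, LinearMap.comp_apply, LinearMap.mulRight_apply]
    rw [hY, sY_eq, liftAlternating_apply_ιMulti, detF_self, det_single]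
  have hLg : L (g * ff K n) = 0 := by
    simp only [hL, LinearMap.comp_apply, LinearMap.mulRight_apply]
    rw [mul_assoc, ffY_zero, mul_zero, map_zero]
  have hLh : L h = 0 := by
    clear heq
    induction hh using Submodule.span_induction with
    | mem e he =>
      obtain ⟨d, hd, hmem, -⟩ := he
      have hmul : e * Y ∈ ⋀[K]^(d + n) (Fin (n + n) → K) := by
        rw [exteriorPower, pow_add]
        exact Submodule.mul_mem_mul hmem (Y_mem K n)
      simp only [hL, LinearMap.comp_apply, LinearMap.mulRight_apply]
      exact lift_zero_on K n (d + n) (by omega) _ hmul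
    | zero => simp
    | add x y _ _ hx hy => simp [hx, hy]
    | smul a x _ hx => simp [hx]
  have : (1 : K) = 0 := by
    rw [← hLs, heq, map_add, hLg, hLh, add_zero]
  exact one_ne_zero this
end

section
/- Let K be a field, E the exterior algebra on basis x_1,...,x_n,y_1,...,y_n, and f = ∑_{i=1}^n x_i∧y_i. Then the annihilator ideal 0:(f) = {e ∈ E : e∧f = 0} contains no nonzero homogeneous element supported only on monomials in the x-variables of degree d < n. -/
open ExteriorAlgebra

/- ### Auxiliary lemmas -/

theorem myOfFn_snoc {α : Type*} {k : ℕ} (v : Fin k → α) (a : α) :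
    List.ofFn (Fin.snoc v a : Fin (k+1) → α) = (List.ofFn v).concat a := by
  rw [List.ofFn_succ']
  simp

theorem myιMulti_snoc (K : Type) [Field K] {M : Type*} [AddCommGroup M] [Module K M]
    {k : ℕ} (v : Fin k → M) (a : M) :
    ιMulti K (k+1) (Fin.snoc v a : Fin (k+1) → M) = ιMulti K k v * ι K a := by
  rw [ιMulti_apply, ιMulti_apply]
  have : (fun i : Fin (k+1) => ι K ((Fin.snoc v a : Fin (k+1) → M) i))
      = Fin.snoc (fun i : Fin k => ι K (v i)) (ι K a) := by
    funext i
    induction i using Fin.lastCases <;> simp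
  rw [this, myOfFn_snoc, List.concat_eq_append, List.prod_append, List.prod_cons, List.prod_nil,
    mul_one]

theorem mySnoc_inj {α : Type*} {k : ℕ} {f : Fin k → α} {x : α} (hf : Function.Injective f)
    (hx : ∀ b, f b ≠ x) : Function.Injective (Fin.snoc f x : Fin (k+1) → α) := by
  intro a b hab
  rcases Fin.eq_castSucc_or_eq_last a with ⟨a', rfl⟩ | rfl <;>
    rcases Fin.eq_castSucc_or_eq_last b with ⟨b', rfl⟩ | rfl <;>
    simp only [Fin.snoc_castSucc, Fin.snoc_last] at hab
  · exact congrArg _ (hf hab)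
  · exact absurd hab (hx a')
  · exact absurd hab.symm (hx b')
  · rfl

theorem mySingle_snoc (K : Type) [Field K] {m k : ℕ} (f : Fin k → Fin m) (x : Fin m) :
    (fun a => Pi.single ((Fin.snoc f x : Fin (k+1) → Fin m) a) (1:K)) =
    (Fin.snoc (fun b => (Pi.single (f b) (1:K) : Fin m → K)) (Pi.single x 1) :
      Fin (k+1) → (Fin m → K)) := by
  funext a
  induction a using Fin.lastCases <;> simp

/-- The coefficient-extracting functional indexed by a finset `T`. -/
noncomputable def lamT (K : Type) [Field K] (m : ℕ) (T : Finset (Fin m)) :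
    ExteriorAlgebra K (Fin m → K) →ₗ[K] K :=
  liftAlternating (Function.update (fun _ => 0) T.card
    ((Matrix.detRowAlternating).compLinearMap
      (LinearMap.pi fun b : Fin T.card => LinearMap.proj ((T.orderIsoOfFin rfl b : Fin m)))))

theorem lamT_card (K : Type) [Field K] {m : ℕ} (T : Finset (Fin m))
    (v : Fin T.card → (Fin m → K)) :
    lamT K m T (ιMulti K T.card v) =
      Matrix.det (Matrix.of fun a b => v a ((T.orderIsoOfFin rfl b : Fin m))) := by
  rw [lamT, liftAlternating_apply_ιMulti, Function.update_self]
  rfl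

theorem lamT_zero_notmem (K : Type) [Field K] {m k : ℕ} (T : Finset (Fin m))
    (hk : k = T.card) (idx : Fin k → Fin m) (a0 : Fin k) (ha : idx a0 ∉ T) :
    lamT K m T (ιMulti K k (fun a => Pi.single (idx a) (1:K))) = 0 := by
  subst hk
  rw [lamT_card]
  apply Matrix.det_eq_zero_of_row_eq_zero a0
  intro b
  simp only [Matrix.of_apply]
  exact Pi.single_eq_of_ne (fun h => ha (by rw [← h]; exact (T.orderIsoOfFin rfl b).2)) 1

theorem lamT_zero_eq (K : Type) [Field K] {m k : ℕ} (T : Finset (Fin m))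
    (hk : k = T.card) (idx : Fin k → Fin m) (a0 a1 : Fin k) (hne : a0 ≠ a1)
    (heq : idx a0 = idx a1) :
    lamT K m T (ιMulti K k (fun a => Pi.single (idx a) (1:K))) = 0 := by
  subst hk
  rw [lamT_card]
  apply Matrix.det_zero_of_row_eq hne
  funext b
  simp only [Matrix.of_apply]
  rw [heq]

theorem lamT_nonzero (K : Type) [Field K] {m k : ℕ} (T : Finset (Fin m))
    (hk : k = T.card) (idx : Fin k → Fin m) (hinj : Function.Injective idx)
    (hmem : ∀ a, idx a ∈ T) :
    lamT K m T (ιMulti K k (fun a => Pi.single (idx a) (1:K))) ≠ 0 := by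
  subst hk
  rw [lamT_card]
  set g : Fin T.card → Fin T.card := fun a => (T.orderIsoOfFin rfl).symm ⟨idx a, hmem a⟩ with hg
  have hginj : Function.Injective g := by
    intro a b hab
    apply hinj
    have := congrArg (fun x => ((T.orderIsoOfFin rfl) x : Fin m)) hab
    simp only [hg, OrderIso.apply_symm_apply] at this
    exact this
  set σ : Equiv.Perm (Fin T.card) := Equiv.ofBijective g (Finite.injective_iff_bijective.mp hginj)
    with hσ
  have hMσ : (Matrix.of fun a b => (Pi.single (idx a) (1:K) : Fin m → K)
      ((T.orderIsoOfFin rfl b : Fin m))) =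
      (1 : Matrix (Fin T.card) (Fin T.card) K).submatrix σ id := by
    ext a b
    simp only [Matrix.of_apply, Matrix.submatrix_apply, Matrix.one_apply, id_eq]
    have hTσ : ((T.orderIsoOfFin rfl (σ a) : Fin m)) = idx a := by
      show ((T.orderIsoOfFin rfl (g a) : Fin m)) = idx a
      rw [hg]
      simp only [OrderIso.apply_symm_apply]
    have hiff : ((T.orderIsoOfFin rfl b : Fin m) = idx a) ↔ σ a = b := by
      constructor
      · intro hc
        exact ((T.orderIsoOfFin rfl).injective (Subtype.ext (hTσ.trans hc.symm)))
      · rintro rfl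
        exact hTσ
    rw [Pi.single_apply, if_congr hiff rfl rfl]
  rw [hMσ, Matrix.det_permute, Matrix.det_one, mul_one]
  rcases Int.units_eq_one_or (Equiv.Perm.sign σ) with h | h <;> rw [h] <;> simp

theorem wedge_eq (K : Type) [Field K] (n : ℕ) (s : Finset (Fin (n+n))) :
    wedgeMonomial K n s = ιMulti K s.card
      (fun a => Pi.single ((s.orderIsoOfFin rfl a : Fin (n+n))) (1:K)) := by
  rw [wedgeMonomial, ιMulti_apply]
  congr 1
  apply List.ext_getElem
  · simp
  · intro i h1 h2
    simp [Finset.coe_orderIsoOfFin_apply, Finset.orderEmbOfFin_apply]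

theorem wedge_mul_xy (K : Type) [Field K] (n : ℕ) (s : Finset (Fin (n+n))) (i : Fin n) :
    wedgeMonomial K n s * (xv K n i * yv K n i) =
      ιMulti K (s.card+1+1) (fun a => Pi.single
        ((Fin.snoc (Fin.snoc (fun b : Fin s.card => ((s.orderIsoOfFin rfl b : Fin (n+n))))
          (Fin.castAdd n i)) (Fin.natAdd n i) : Fin (s.card+1+1) → Fin (n+n)) a) (1:K)) := by
  rw [mySingle_snoc, mySingle_snoc, myιMulti_snoc, myιMulti_snoc, ← wedge_eq, mul_assoc]
  rfl

/-- The annihilator of `f` contains no nonzero homogeneous element of degree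
`d < n` supported only on monomials in the `x`-variables. -/
theorem stmt7 (K : Type) [Field K] (n d : ℕ) (hd : d < n)
    (c : Finset (Fin (n + n)) → K)
    (e : ExteriorAlgebra K (Fin (n + n) → K))
    (he : e = ∑ s ∈ (Finset.univ.powersetCard d).filter
        (fun s => ∀ i : Fin (n + n), i ∈ s → (i : ℕ) < n), c s • wedgeMonomial K n s)
    (hef : e * ff K n = 0) :
    e = 0 := by
  set S := (Finset.univ.powersetCard d).filter
      (fun s : Finset (Fin (n+n)) => ∀ i : Fin (n + n), i ∈ s → (i : ℕ) < n) with hS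
  have key : ∀ s₀ ∈ S, c s₀ = 0 := by
    intro s₀ hs₀mem
    have hs₀ := hs₀mem
    rw [hS, Finset.mem_filter, Finset.mem_powersetCard] at hs₀
    obtain ⟨⟨-, hcard⟩, hx⟩ := hs₀
    -- choose `i₀` with `x_{i₀} ∉ s₀`
    have hcastinj : Function.Injective (Fin.castAdd n : Fin n → Fin (n+n)) := by
      intro a b h
      have h2 := congrArg Fin.val h
      simp only [Fin.coe_castAdd] at h2
      exact Fin.ext h2
    have hsub : s₀ ⊆ Finset.univ.image (Fin.castAdd n) := by
      intro j hj
      rw [Finset.mem_image]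
      exact ⟨⟨(j : ℕ), hx j hj⟩, Finset.mem_univ _, by apply Fin.ext; simp⟩
    have hss : s₀ ⊂ Finset.univ.image (Fin.castAdd n) := by
      rw [Finset.ssubset_iff_subset_ne]
      refine ⟨hsub, fun h => ?_⟩
      rw [h, Finset.card_image_of_injective _ hcastinj, Finset.card_univ, Fintype.card_fin]
        at hcard
      omega
    obtain ⟨j₀, hj₀mem, hj₀not⟩ := Finset.exists_of_ssubset hss
    obtain ⟨i₀, -, rfl⟩ := Finset.mem_image.mp hj₀mem
    set xA := Fin.castAdd n i₀ with hxA
    set yA := Fin.natAdd n i₀ with hyA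
    have hyA_notin : ∀ s : Finset (Fin (n+n)), (∀ j ∈ s, (j : ℕ) < n) → yA ∉ s := by
      intro s hs h
      have := hs yA h
      simp only [hyA, Fin.coe_natAdd] at this
      omega
    have hxy : xA ≠ yA := by
      intro h
      have := congrArg Fin.val h
      simp only [hxA, hyA, Fin.coe_castAdd, Fin.coe_natAdd] at this
      have := i₀.2
      omega
    set T : Finset (Fin (n+n)) := insert xA (insert yA s₀) with hT
    have hyA_s₀ : yA ∉ s₀ := hyA_notin s₀ hx
    have hxA_ins : xA ∉ insert yA s₀ := by
      rw [Finset.mem_insert]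
      rintro (h | h)
      · exact hxy h
      · exact hj₀not h
    have hTcard : T.card = d + 2 := by
      rw [hT, Finset.card_insert_of_notMem hxA_ins, Finset.card_insert_of_notMem hyA_s₀, hcard]
    have hmemT : ∀ j : Fin (n+n), j ∈ T ↔ j = xA ∨ j = yA ∨ j ∈ s₀ := by
      intro j
      simp [hT, Finset.mem_insert]
    -- the sum identity
    have hsum : e * ff K n = ∑ s ∈ S, ∑ i : Fin n,
        c s • (wedgeMonomial K n s * (xv K n i * yv K n i)) := by
      rw [he, ff, Finset.sum_mul]
      refine Finset.sum_congr rfl fun s _ => ?_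
      rw [smul_mul_assoc, Finset.mul_sum, Finset.smul_sum]
    have h1 := congrArg (lamT K (n+n) T) (hsum.symm.trans hef)
    rw [map_zero] at h1
    simp only [map_sum, map_smul, smul_eq_mul] at h1
    -- vanishing of all terms except `(s₀, i₀)`
    have hvan : ∀ s ∈ S, ∀ i : Fin n, (s ≠ s₀ ∨ i ≠ i₀) →
        lamT K (n+n) T (wedgeMonomial K n s * (xv K n i * yv K n i)) = 0 := by
      intro s hsS i hor
      have hs := hsS
      rw [hS, Finset.mem_filter, Finset.mem_powersetCard] at hs
      obtain ⟨⟨-, hscard⟩, hsx⟩ := hs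
      have hk : s.card + 1 + 1 = T.card := by rw [hscard, hTcard]
      rw [wedge_mul_xy]
      by_cases hxi : Fin.castAdd n i ∈ s
      · -- repeated index
        set a₀ := (s.orderIsoOfFin rfl).symm ⟨Fin.castAdd n i, hxi⟩ with ha₀
        refine lamT_zero_eq K T hk _ (Fin.castSucc (Fin.castSucc a₀))
          (Fin.castSucc (Fin.last s.card)) ?_ ?_
        · intro h
          have := Fin.castSucc_injective _ h
          exact absurd (congrArg Fin.val this) (by simp [Fin.lt_iff_val_lt_val]; omega)
        · simp only [Fin.snoc_castSucc, Fin.snoc_last, ha₀]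
          simp
      · by_cases hii : i = i₀
        · subst hii
          have hsne : s ≠ s₀ := by
            rcases hor with h | h
            · exact h
            · exact absurd rfl h
          -- there is an element of s not in s₀
          have hnsub : ¬ s ⊆ s₀ := by
            intro h
            exact hsne (Finset.eq_of_subset_of_card_le h (by rw [hscard, hcard]))
          obtain ⟨j, hjs, hjnot⟩ := Finset.not_subset.mp hnsub
          set a₀ := (s.orderIsoOfFin rfl).symm ⟨j, hjs⟩ with ha₀
          refine lamT_zero_notmem K T hk _ (Fin.castSucc (Fin.castSucc a₀)) ?_
          simp only [Fin.snoc_castSucc, ha₀]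
          rw [hmemT]
          push_neg
          simp only [OrderIso.apply_symm_apply]
          refine ⟨fun h => hxi (show xA ∈ s from h ▸ hjs), fun h => hyA_notin s hsx (h ▸ hjs), hjnot⟩
        · -- y_i not in T
          refine lamT_zero_notmem K T hk _ (Fin.last _) ?_
          simp only [Fin.snoc_last]
          rw [hmemT]
          push_neg
          refine ⟨?_, ?_, ?_⟩
          · intro h
            have := congrArg Fin.val h
            simp only [hxA, Fin.coe_natAdd, Fin.coe_castAdd] at this
            have := i₀.2
            omega
          · intro h
            apply hii
            have := congrArg Fin.val h
            simp only [hyA, Fin.coe_natAdd] at this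
            exact Fin.ext (by omega)
          · intro h
            have := hx _ h
            simp only [Fin.coe_natAdd] at this
            omega
    -- the remaining term is nonzero
    have hnz : lamT K (n+n) T (wedgeMonomial K n s₀ * (xv K n i₀ * yv K n i₀)) ≠ 0 := by
      have hk : s₀.card + 1 + 1 = T.card := by rw [hcard, hTcard]
      rw [wedge_mul_xy]
      set base : Fin s₀.card → Fin (n+n) := fun b => (s₀.orderIsoOfFin rfl b : Fin (n+n))
        with hbase
      have hbinj : Function.Injective base := by
        intro a b h
        exact (s₀.orderIsoOfFin rfl).injective (Subtype.ext h)
      have hinj1 : Function.Injective (Fin.snoc base xA : Fin (s₀.card+1) → Fin (n+n)) := by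
        refine mySnoc_inj hbinj fun b h => ?_
        exact hj₀not (h ▸ (s₀.orderIsoOfFin rfl b).2)
      have hinj2 : Function.Injective
          (Fin.snoc (Fin.snoc base xA) yA : Fin (s₀.card+1+1) → Fin (n+n)) := by
        refine mySnoc_inj hinj1 fun b h => ?_
        rcases Fin.eq_castSucc_or_eq_last b with ⟨b', rfl⟩ | rfl
        · rw [Fin.snoc_castSucc] at h
          exact hyA_s₀ (h ▸ (s₀.orderIsoOfFin rfl b').2)
        · rw [Fin.snoc_last] at h
          exact hxy h
      refine lamT_nonzero K T hk _ hinj2 fun a => ?_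
      rw [hmemT]
      rcases Fin.eq_castSucc_or_eq_last a with ⟨a', rfl⟩ | rfl
      · rw [Fin.snoc_castSucc]
        rcases Fin.eq_castSucc_or_eq_last a' with ⟨a'', rfl⟩ | rfl
        · rw [Fin.snoc_castSucc]
          exact Or.inr (Or.inr (s₀.orderIsoOfFin rfl a'').2)
        · rw [Fin.snoc_last]
          exact Or.inl rfl
      · rw [Fin.snoc_last]
        exact Or.inr (Or.inl rfl)
    -- collapse the double sum
    rw [Finset.sum_eq_single s₀ (fun s hsS hne => Finset.sum_eq_zero fun i _ => by
        rw [hvan s hsS i (Or.inl hne), mul_zero])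
      (fun h => absurd hs₀mem h)] at h1
    rw [Finset.sum_eq_single i₀ (fun i _ hne => by
        rw [hvan s₀ hs₀mem i (Or.inr hne), mul_zero])
      (fun h => absurd (Finset.mem_univ i₀) h)] at h1
    exact (mul_eq_zero.mp h1).resolve_right hnz
  rw [he]
  exact Finset.sum_eq_zero fun s hs => by rw [key s hs, zero_smul]
end
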